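/- arXiv:1805.08558 — 3 statements merged into one kernel-verified Lean document; each statement's English description precedes it below -/
import Mathlib

section
/- Let β be a p-contractive barycentric map on 𝒫^p(M), and for a measurable set A ⊂ Ω with P(A) > 0, let E^β(φ|_A) denote the β-expectation of the restriction of φ to A under the normalized measure P(A)^{-1} P|_A. If φ, ψ ∈ L^p(Ω;M) satisfy E^β(φ|_A) = E^β(ψ|_A) for every A ∈ 𝒜 with P(A) > 0, then φ = ψ almost everywhere. -/
open MeasureTheory ENNReal Filter Topology

noncomputable section

variable {Ω M : Type*}

/-- A coupling of two measures on `M`. -/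
def IsCoupling [MeasurableSpace M] (π : MeasureTheory.Measure (M × M))
    (μ ν : MeasureTheory.Measure M) : Prop :=
  π.map Prod.fst = μ ∧ π.map Prod.snd = ν

/-- The `p`-Wasserstein (extended) distance between two measures. -/
def wassDist [MeasurableSpace M] [PseudoEMetricSpace M] (p : ℝ)
    (μ ν : MeasureTheory.Measure M) : ℝ≥0∞ :=
  ⨅ (π : MeasureTheory.Measure (M × M)) (_ : IsCoupling π μ ν),
    (∫⁻ xy, edist xy.1 xy.2 ^ p ∂π) ^ (1 / p)

/-- Finite `p`-th moment. -/
def HasFinitePMoment [MeasurableSpace M] [PseudoEMetricSpace M] (p : ℝ)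
    (μ : MeasureTheory.Measure M) : Prop :=
  ∀ x : M, ∫⁻ y, edist x y ^ p ∂μ < ⊤

/-- `p`-th Bochner integrability of an `M`-valued function. -/
def PIntegrable {mΩ : MeasurableSpace Ω} [PseudoEMetricSpace M] (p : ℝ)
    (P : MeasureTheory.Measure Ω) (φ : Ω → M) : Prop :=
  MeasureTheory.AEStronglyMeasurable φ P ∧ ∀ x : M, ∫⁻ ω, edist x (φ ω) ^ p ∂P < ⊤

/-- A `p`-contractive barycentric map. -/
structure IsBarycentric [MeasurableSpace M] [PseudoEMetricSpace M] (p : ℝ)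
    (β : MeasureTheory.Measure M → M) : Prop where
  map_dirac : ∀ x : M, β (MeasureTheory.Measure.dirac x) = x
  contract : ∀ μ ν : MeasureTheory.Measure M, MeasureTheory.IsProbabilityMeasure μ →
    MeasureTheory.IsProbabilityMeasure ν → HasFinitePMoment p μ → HasFinitePMoment p ν →
    edist (β μ) (β ν) ≤ wassDist p μ ν

theorem stmt5 [MeasurableSpace Ω] [MetricSpace M] [CompleteSpace M] [MeasurableSpace M]
    [BorelSpace M] (P : MeasureTheory.Measure Ω) [MeasureTheory.IsProbabilityMeasure P]
    (p : ℝ) (hp : 1 ≤ p) (β : MeasureTheory.Measure M → M) (hβ : IsBarycentric p β)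
    (φ ψ : Ω → M) (hφ : PIntegrable p P φ) (hψ : PIntegrable p P ψ)
    (h : ∀ A : Set Ω, MeasurableSet A → 0 < P A →
      β (((P A)⁻¹ • P.restrict A).map φ) = β (((P A)⁻¹ • P.restrict A).map ψ)) :
    φ =ᵐ[P] ψ := by
  classical
  have hp0 : p ≠ 0 := by linarith
  have hpnn : (0:ℝ) ≤ p := by linarith
  set f := hφ.1.mk φ with hfdef
  set g := hψ.1.mk ψ with hgdef
  have hfm : Measurable f := hφ.1.stronglyMeasurable_mk.measurable
  have hgm : Measurable g := hψ.1.stronglyMeasurable_mk.measurable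
  have hfe : φ =ᵐ[P] f := hφ.1.ae_eq_mk
  have hge : ψ =ᵐ[P] g := hψ.1.ae_eq_mk
  have hfint : ∀ x : M, ∫⁻ ω, edist x (f ω) ^ p ∂P < ⊤ := by
    intro x
    have : ∫⁻ ω, edist x (f ω) ^ p ∂P = ∫⁻ ω, edist x (φ ω) ^ p ∂P := by
      refine lintegral_congr_ae ?_
      filter_upwards [hfe] with ω hω
      rw [hω]
    rw [this]; exact hφ.2 x
  have hgint : ∀ x : M, ∫⁻ ω, edist x (g ω) ^ p ∂P < ⊤ := by
    intro x
    have : ∫⁻ ω, edist x (g ω) ^ p ∂P = ∫⁻ ω, edist x (ψ ω) ^ p ∂P := by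
      refine lintegral_congr_ae ?_
      filter_upwards [hge] with ω hω
      rw [hω]
    rw [this]; exact hψ.2 x
  -- Key claim: conditioning on preimages of small balls
  have key : ∀ (x y : M) (q : ℝ), 0 < q → 2 * q < dist x y →
      P (f ⁻¹' Metric.ball x q ∩ g ⁻¹' Metric.ball y q) = 0 := by
    intro x y q hq hlt
    by_contra hne
    set A := f ⁻¹' Metric.ball x q ∩ g ⁻¹' Metric.ball y q with hAdef
    have hAmeas : MeasurableSet A :=
      (hfm measurableSet_ball).inter (hgm measurableSet_ball)
    have hpos : 0 < P A := pos_iff_ne_zero.mpr hne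
    have hPAne : P A ≠ 0 := hne
    have hPAnetop : P A ≠ ⊤ := measure_ne_top P A
    set μ : Measure Ω := (P A)⁻¹ • P.restrict A with hμdef
    have hμprob : IsProbabilityMeasure μ := by
      constructor
      rw [hμdef, Measure.smul_apply, Measure.restrict_apply_univ, smul_eq_mul,
        ENNReal.inv_mul_cancel hPAne hPAnetop]
    have hμA : ∀ᵐ ω ∂μ, ω ∈ A := by
      rw [hμdef]
      exact Measure.ae_smul_measure (ae_restrict_mem hAmeas) _
    have hμle : ∀ (F : Ω → ℝ≥0∞), ∫⁻ ω, F ω ∂μ ≤ (P A)⁻¹ * ∫⁻ ω, F ω ∂P := by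
      intro F
      rw [hμdef, lintegral_smul_measure]
      exact mul_le_mul_right (lintegral_mono' Measure.restrict_le_self le_rfl) _
    have hinvlt : (P A)⁻¹ < ⊤ := ENNReal.inv_lt_top.mpr hpos
    have hedist : ∀ w : M, Measurable (fun y : M => edist w y ^ p) := fun w =>
      ((continuous_const.edist continuous_id).measurable).pow_const p
    -- moments of dirac measures
    have hmomd : ∀ z : M, HasFinitePMoment p (Measure.dirac z) := by
      intro z w
      rw [lintegral_dirac' _ (hedist w)]
      exact ENNReal.rpow_lt_top_of_nonneg hpnn (edist_ne_top w z)
    -- the generic bound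
    have bound : ∀ (u : Ω → M) (z : M), Measurable u →
        (∀ w : M, ∫⁻ ω, edist w (u ω) ^ p ∂P < ⊤) →
        (∀ ω ∈ A, u ω ∈ Metric.ball z q) →
        edist (β (μ.map u)) z ≤ ENNReal.ofReal q := by
      intro u z hum huint hball
      have humap : IsProbabilityMeasure (μ.map u) :=
        Measure.isProbabilityMeasure_map hum.aemeasurable
      have hmom : HasFinitePMoment p (μ.map u) := by
        intro w
        rw [lintegral_map (hedist w) hum]
        calc ∫⁻ ω, edist w (u ω) ^ p ∂μ ≤ (P A)⁻¹ * ∫⁻ ω, edist w (u ω) ^ p ∂P :=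
              hμle _
          _ < ⊤ := ENNReal.mul_lt_top hinvlt (huint w)
      set π : Measure (M × M) := μ.map (fun ω => (u ω, z)) with hπdef
      have hπm : Measurable (fun ω => (u ω, z)) := hum.prodMk measurable_const
      have hcoup : IsCoupling π (μ.map u) (Measure.dirac z) := by
        constructor
        · rw [hπdef, Measure.map_map measurable_fst hπm]
          rfl
        · rw [hπdef, Measure.map_map measurable_snd hπm]
          show μ.map (fun _ => z) = Measure.dirac z
          rw [Measure.map_const, measure_univ, one_smul]
      have hsnd : ∀ᵐ xy ∂π, xy.2 = z := by
        rw [hπdef]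
        refine (ae_map_iff hπm.aemeasurable ?_).mpr (ae_of_all _ fun ω => rfl)
        exact measurable_snd (measurableSet_singleton z)
      have hG : Measurable (fun xy : M × M => edist xy.1 z ^ p) :=
        ((((continuous_id.edist continuous_const).measurable).pow_const p).comp
          measurable_fst : Measurable ((fun m : M => edist m z ^ p) ∘ Prod.fst))
      have hIeq : (∫⁻ xy, edist xy.1 xy.2 ^ p ∂π) = ∫⁻ ω, edist (u ω) z ^ p ∂μ := by
        have hae : (fun xy : M × M => edist xy.1 xy.2 ^ p) =ᵐ[π]
            (fun xy => edist xy.1 z ^ p) := by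
          filter_upwards [hsnd] with xy h2
          rw [h2]
        rw [lintegral_congr_ae hae, hπdef, lintegral_map hG hπm]
      have hIle : (∫⁻ xy, edist xy.1 xy.2 ^ p ∂π) ≤ ENNReal.ofReal q ^ p := by
        rw [hIeq]
        calc ∫⁻ ω, edist (u ω) z ^ p ∂μ ≤ ∫⁻ _, ENNReal.ofReal q ^ p ∂μ := by
              refine lintegral_mono_ae ?_
              filter_upwards [hμA] with ω hω
              refine ENNReal.rpow_le_rpow ?_ hpnn
              rw [edist_dist]
              exact ENNReal.ofReal_le_ofReal (Metric.mem_ball.mp (hball ω hω)).le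
          _ = ENNReal.ofReal q ^ p := by
              rw [lintegral_const, measure_univ, mul_one]
      have hW : wassDist p (μ.map u) (Measure.dirac z) ≤ ENNReal.ofReal q := by
        have h1 : wassDist p (μ.map u) (Measure.dirac z) ≤
            (∫⁻ xy, edist xy.1 xy.2 ^ p ∂π) ^ (1 / p) := by
          simp only [wassDist]
          exact iInf_le_of_le π (iInf_le _ hcoup)
        refine h1.trans ?_
        calc (∫⁻ xy, edist xy.1 xy.2 ^ p ∂π) ^ (1 / p)
            ≤ (ENNReal.ofReal q ^ p) ^ (1 / p) :=
              ENNReal.rpow_le_rpow hIle (by positivity)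
          _ = ENNReal.ofReal q := by
              rw [← ENNReal.rpow_mul, mul_one_div_cancel hp0, ENNReal.rpow_one]
      have hcon := hβ.contract (μ.map u) (Measure.dirac z) humap (by infer_instance)
        hmom (hmomd z)
      rw [hβ.map_dirac] at hcon
      exact hcon.trans hW
    have hfx : edist (β (μ.map f)) x ≤ ENNReal.ofReal q :=
      bound f x hfm hfint (fun ω hω => hω.1)
    have hgy : edist (β (μ.map g)) y ≤ ENNReal.ofReal q :=
      bound g y hgm hgint (fun ω hω => hω.2)
    have heq : β (μ.map f) = β (μ.map g) := by
      have h1 : μ.map φ = μ.map f := by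
        refine Measure.map_congr ?_
        rw [hμdef]
        exact Measure.ae_smul_measure (ae_restrict_of_ae hfe) _
      have h2 : μ.map ψ = μ.map g := by
        refine Measure.map_congr ?_
        rw [hμdef]
        exact Measure.ae_smul_measure (ae_restrict_of_ae hge) _
      have := h A hAmeas hpos
      rw [← hμdef] at this
      rwa [h1, h2] at this
    have htri : edist x y ≤ ENNReal.ofReal q + ENNReal.ofReal q := by
      calc edist x y ≤ edist x (β (μ.map f)) + edist (β (μ.map g)) y := by
            rw [heq]; exact edist_triangle _ _ _
        _ ≤ ENNReal.ofReal q + ENNReal.ofReal q := by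
            refine add_le_add ?_ hgy
            rw [edist_comm]; exact hfx
    rw [edist_dist, ← ENNReal.ofReal_add hq.le hq.le] at htri
    have := (ENNReal.ofReal_le_ofReal_iff (by linarith)).mp htri
    linarith
  -- separability
  obtain ⟨c1, hc1count, hc1⟩ := hφ.1.stronglyMeasurable_mk.isSeparable_range
  obtain ⟨c2, hc2count, hc2⟩ := hψ.1.stronglyMeasurable_mk.isSeparable_range
  -- the bad set is contained in a countable union of null sets
  set T : M → M → ℚ → Set Ω := fun x y q =>
    if 0 < (q:ℝ) ∧ 2 * (q:ℝ) < dist x y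
    then f ⁻¹' Metric.ball x (q:ℝ) ∩ g ⁻¹' Metric.ball y (q:ℝ) else ∅ with hTdef
  have hTnull : ∀ x y q, P (T x y q) = 0 := by
    intro x y q
    simp only [hTdef]
    by_cases hc : 0 < (q:ℝ) ∧ 2 * (q:ℝ) < dist x y
    · rw [if_pos hc]; exact key x y q hc.1 hc.2
    · rw [if_neg hc]; exact measure_empty
  have hfg : f =ᵐ[P] g := by
    rw [Filter.EventuallyEq, MeasureTheory.ae_iff]
    have hUnull : P (⋃ x ∈ c1, ⋃ y ∈ c2, ⋃ q : ℚ, T x y q) = 0 := by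
      rw [measure_biUnion_null_iff hc1count]
      intro x _
      rw [measure_biUnion_null_iff hc2count]
      intro y _
      exact measure_iUnion_null (fun q => hTnull x y q)
    refine measure_mono_null ?_ hUnull
    · intro ω hω
      have hωne : f ω ≠ g ω := hω
      have hd : 0 < dist (f ω) (g ω) := dist_pos.mpr hωne
      obtain ⟨q, hq0, hq4⟩ := exists_rat_btwn (by linarith : (0:ℝ) < dist (f ω) (g ω) / 4)
      have hfω : f ω ∈ closure c1 := hc1 ⟨ω, rfl⟩
      have hgω : g ω ∈ closure c2 := hc2 ⟨ω, rfl⟩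
      obtain ⟨x, hx, hxd⟩ := Metric.mem_closure_iff.mp hfω (q:ℝ) hq0
      obtain ⟨y, hy, hyd⟩ := Metric.mem_closure_iff.mp hgω (q:ℝ) hq0
      have hxy : 2 * (q:ℝ) < dist x y := by
        have h1 : dist (f ω) (g ω) ≤ dist (f ω) x + dist x y + dist y (g ω) :=
          dist_triangle4 _ _ _ _
        have h2 : dist y (g ω) < q := by rw [dist_comm]; exact hyd
        linarith
      simp only [Set.mem_iUnion]
      refine ⟨x, hx, y, hy, q, ?_⟩
      simp only [hTdef]
      rw [if_pos ⟨hq0, hxy⟩]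
      exact ⟨Metric.mem_ball.mpr hxd, Metric.mem_ball.mpr hyd⟩
  exact hfe.trans (hfg.trans hge.symm)
end
end

section
/- The β-conditional expectation E_ℬ^β is a contraction: for all φ, ψ ∈ L^p(Ω;M), d_p(E_ℬ^β(φ), E_ℬ^β(ψ)) ≤ d_p(φ,ψ), where d_p denotes the L^p distance d_p(φ,ψ) = (∫ d^p(φ(ω),ψ(ω)) dP)^{1/p}. -/
open MeasureTheory ENNReal Filter Topology

noncomputable section

variable {Ω M : Type*}

/-- A disintegration of `P` with respect to the sub-σ-algebra `ℬ`:
a family of probability measures `K ω` (on the ambient σ-algebra) such that for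
every measurable `A`, `ω ↦ K ω A` is `ℬ`-measurable and is a version of the
conditional expectation of the indicator of `A` with respect to `ℬ`. -/
def IsDisintegration {mΩ : MeasurableSpace Ω} (P : @MeasureTheory.Measure Ω mΩ)
    (ℬ : MeasurableSpace Ω) (K : Ω → @MeasureTheory.Measure Ω mΩ) : Prop :=
  (∀ ω, MeasureTheory.IsProbabilityMeasure (K ω)) ∧
  ∀ A : Set Ω, MeasurableSet[mΩ] A →
    Measurable[ℬ] (fun ω => (K ω A).toReal) ∧
    (fun ω => (K ω A).toReal) =ᵐ[P] P[A.indicator (fun _ => (1 : ℝ)) | ℬ]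

/-- The `β`-conditional expectation `ω ↦ β (φ_* P_ω)` defined from a
disintegration `K` of `P`. -/
def condBary {mΩ : MeasurableSpace Ω} [MeasurableSpace M] [PseudoEMetricSpace M]
    (β : MeasureTheory.Measure M → M) (K : Ω → @MeasureTheory.Measure Ω mΩ)
    (φ : Ω → M) (ω : Ω) : M :=
  β ((K ω).map φ)

/-!
For each `ω`, the image of `P_ω` under `(φ, ψ)` couples `φ_* P_ω` and `ψ_* P_ω`, so
`p`-contractivity of `β` bounds `d(E(φ)(ω), E(ψ)(ω))^p` by `∫ d(φ, ψ)^p dP_ω`. Integrating in `ω`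
and using `∫ P_ω dP(ω) = P` gives the claim. Passing to strongly measurable versions of `φ, ψ`
changes `E(φ), E(ψ)` only on a `P`-null set, because a `P`-null set is `P_ω`-null for a.e. `ω`.
-/

section Wasserstein

variable [MeasurableSpace M] {p : ℝ}

theorem hasFinitePMoment_of_lintegral_lt_top [PseudoMetricSpace M] (hp : 0 ≤ p)
    {μ : Measure M} [IsFiniteMeasure μ] (x₀ : M) (h : ∫⁻ y, edist x₀ y ^ p ∂μ < ⊤) :
    HasFinitePMoment p μ := by
  intro x
  set C := LpAddConst (ENNReal.ofReal p)⁻¹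
  calc ∫⁻ y, edist x y ^ p ∂μ ≤ ∫⁻ y, C * (edist x x₀ ^ p + edist x₀ y ^ p) ∂μ :=
        lintegral_mono fun y => (ENNReal.rpow_le_rpow (edist_triangle _ _ _) hp).trans
          (ENNReal.rpow_add_le_mul_rpow_add_rpow' _ _ hp)
    _ = C * (edist x x₀ ^ p * μ Set.univ + ∫⁻ y, edist x₀ y ^ p ∂μ) := by
        rw [lintegral_const_mul' _ _ (LpAddConst_lt_top _).ne,
          lintegral_add_left measurable_const, lintegral_const]
    _ < ⊤ := ENNReal.mul_lt_top (LpAddConst_lt_top _) <| ENNReal.add_lt_top.2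
        ⟨ENNReal.mul_lt_top (ENNReal.rpow_lt_top_of_nonneg hp (edist_ne_top _ _))
          (measure_lt_top _ _), h⟩

variable [PseudoEMetricSpace M] [MeasurableSpace Ω]

theorem wassDist_map_le (hp : 0 ≤ p) (μ : Measure Ω) {g h : Ω → M}
    (hg : Measurable g) (hh : Measurable h) :
    wassDist p (μ.map g) (μ.map h) ≤ (∫⁻ x, edist (g x) (h x) ^ p ∂μ) ^ (1 / p) := by
  have hgh : Measurable fun x => (g x, h x) := hg.prodMk hh
  have hcoupling : IsCoupling (μ.map fun x => (g x, h x)) (μ.map g) (μ.map h) :=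
    ⟨by rw [Measure.map_map measurable_fst hgh]; rfl,
      by rw [Measure.map_map measurable_snd hgh]; rfl⟩
  unfold wassDist
  refine (iInf₂_le (μ.map fun x => (g x, h x)) hcoupling).trans ?_
  exact ENNReal.rpow_le_rpow (lintegral_map_le _ _) (one_div_nonneg.2 hp)

theorem IsBarycentric.edist_map_rpow_le {β : Measure M → M} (hβ : IsBarycentric p β)
    (hp : 0 < p) (μ : Measure Ω) [IsProbabilityMeasure μ] {g h : Ω → M}
    (hg : Measurable g) (hh : Measurable h)
    (hgμ : HasFinitePMoment p (μ.map g)) (hhμ : HasFinitePMoment p (μ.map h)) :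
    edist (β (μ.map g)) (β (μ.map h)) ^ p ≤ ∫⁻ x, edist (g x) (h x) ^ p ∂μ := by
  have hcontract : edist (β (μ.map g)) (β (μ.map h))
      ≤ (∫⁻ x, edist (g x) (h x) ^ p ∂μ) ^ (1 / p) :=
    (hβ.contract _ _ (Measure.isProbabilityMeasure_map hg.aemeasurable)
      (Measure.isProbabilityMeasure_map hh.aemeasurable) hgμ hhμ).trans
      (wassDist_map_le hp.le μ hg hh)
  calc edist (β (μ.map g)) (β (μ.map h)) ^ p
      ≤ ((∫⁻ x, edist (g x) (h x) ^ p ∂μ) ^ (1 / p)) ^ p :=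
        ENNReal.rpow_le_rpow hcontract hp.le
    _ = ∫⁻ x, edist (g x) (h x) ^ p ∂μ := by
        rw [← ENNReal.rpow_mul, one_div_mul_cancel hp.ne', ENNReal.rpow_one]

end Wasserstein

namespace IsDisintegration

variable {ℬ : MeasurableSpace Ω} [mΩ : MeasurableSpace Ω] {P : Measure Ω} {K : Ω → Measure Ω}

theorem measurable_apply (hK : IsDisintegration P ℬ K) (hℬ : ℬ ≤ mΩ) {A : Set Ω}
    (hA : MeasurableSet A) : Measurable fun ω => K ω A := by
  have hK_ofReal : (fun ω => K ω A) = fun ω => ENNReal.ofReal (K ω A).toReal :=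
    funext fun ω => by
      have := hK.1 ω
      rw [ENNReal.ofReal_toReal (measure_ne_top _ _)]
  rw [hK_ofReal]
  exact ((hK.2 A hA).1.mono hℬ le_rfl).ennreal_ofReal

theorem measurable (hK : IsDisintegration P ℬ K) (hℬ : ℬ ≤ mΩ) : Measurable K :=
  Measure.measurable_of_measurable_coe _ fun _ hA => hK.measurable_apply hℬ hA

variable [IsFiniteMeasure P]

theorem lintegral_apply (hK : IsDisintegration P ℬ K) (hℬ : ℬ ≤ mΩ) {A : Set Ω}
    (hA : MeasurableSet A) : ∫⁻ ω, K ω A ∂P = P A := by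
  have hcondExp := (hK.2 A hA).2
  calc ∫⁻ ω, K ω A ∂P = ∫⁻ ω, ENNReal.ofReal (K ω A).toReal ∂P :=
        lintegral_congr fun ω => by
          have := hK.1 ω
          rw [ENNReal.ofReal_toReal (measure_ne_top _ _)]
    _ = ENNReal.ofReal (∫ ω, (K ω A).toReal ∂P) :=
        (ofReal_integral_eq_lintegral_ofReal (integrable_condExp.congr hcondExp.symm)
          (ae_of_all _ fun _ => ENNReal.toReal_nonneg)).symm
    _ = P A := by
        rw [integral_congr_ae hcondExp, integral_condExp hℬ, integral_indicator_const _ hA,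
          smul_eq_mul, mul_one, measureReal_def, ENNReal.ofReal_toReal (measure_ne_top _ _)]

theorem bind_eq (hK : IsDisintegration P ℬ K) (hℬ : ℬ ≤ mΩ) : P.bind K = P := by
  ext A hA
  rw [Measure.bind_apply hA (hK.measurable hℬ).aemeasurable, hK.lintegral_apply hℬ hA]

theorem lintegral_lintegral (hK : IsDisintegration P ℬ K) (hℬ : ℬ ≤ mΩ) {f : Ω → ℝ≥0∞}
    (hf : AEMeasurable f P) : ∫⁻ ω, ∫⁻ x, f x ∂K ω ∂P = ∫⁻ x, f x ∂P := by
  conv_rhs => rw [← hK.bind_eq hℬ]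
  exact (Measure.lintegral_bind (hK.measurable hℬ).aemeasurable
    (by rwa [hK.bind_eq hℬ])).symm

theorem ae_ae_of_ae (hK : IsDisintegration P ℬ K) (hℬ : ℬ ≤ mΩ) {q : Ω → Prop}
    (h : ∀ᵐ x ∂P, q x) : ∀ᵐ ω ∂P, ∀ᵐ x ∂K ω, q x :=
  Measure.ae_ae_of_ae_bind (hK.measurable hℬ).aemeasurable (by rwa [hK.bind_eq hℬ])

theorem ae_lintegral_lt_top (hK : IsDisintegration P ℬ K) (hℬ : ℬ ≤ mΩ) {f : Ω → ℝ≥0∞}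
    (hf : Measurable f) (hfP : ∫⁻ x, f x ∂P < ⊤) : ∀ᵐ ω ∂P, ∫⁻ x, f x ∂K ω < ⊤ :=
  ae_lt_top ((Measure.measurable_lintegral hf).comp (hK.measurable hℬ))
    (by rw [hK.lintegral_lintegral hℬ hf.aemeasurable]; exact hfP.ne)

variable [MeasurableSpace M] {p : ℝ}

theorem condBary_ae_congr [PseudoEMetricSpace M] (hK : IsDisintegration P ℬ K)
    (hℬ : ℬ ≤ mΩ) (β : Measure M → M) {φ g : Ω → M} (hφg : φ =ᵐ[P] g) :
    condBary β K φ =ᵐ[P] condBary β K g :=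
  (hK.ae_ae_of_ae hℬ hφg).mono fun ω hω => by
    simp only [condBary, Measure.map_congr hω]

variable [PseudoMetricSpace M] [BorelSpace M]

theorem ae_hasFinitePMoment_map (hK : IsDisintegration P ℬ K) (hℬ : ℬ ≤ mΩ) (hp : 0 ≤ p)
    {g : Ω → M} (hg : Measurable g) (x₀ : M) (hgP : ∫⁻ ω, edist x₀ (g ω) ^ p ∂P < ⊤) :
    ∀ᵐ ω ∂P, HasFinitePMoment p ((K ω).map g) := by
  have hdist : Measurable fun y => edist x₀ y ^ p :=
    (continuous_const.edist continuous_id).measurable.pow_const p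
  filter_upwards [hK.ae_lintegral_lt_top hℬ (hdist.comp hg) hgP] with ω hω
  have := hK.1 ω
  have := Measure.isProbabilityMeasure_map (μ := K ω) hg.aemeasurable
  exact hasFinitePMoment_of_lintegral_lt_top hp x₀ (by rwa [lintegral_map hdist hg])

theorem lintegral_edist_condBary_rpow_le_of_stronglyMeasurable (hK : IsDisintegration P ℬ K)
    (hℬ : ℬ ≤ mΩ) (hp : 0 < p) {β : Measure M → M} (hβ : IsBarycentric p β) {g h : Ω → M}
    (hg : StronglyMeasurable g) (hh : StronglyMeasurable h) (x₀ : M)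
    (hgP : ∫⁻ ω, edist x₀ (g ω) ^ p ∂P < ⊤) (hhP : ∫⁻ ω, edist x₀ (h ω) ^ p ∂P < ⊤) :
    ∫⁻ ω, edist (condBary β K g ω) (condBary β K h ω) ^ p ∂P
      ≤ ∫⁻ ω, edist (g ω) (h ω) ^ p ∂P := by
  have hdist : Measurable fun ω => edist (g ω) (h ω) ^ p :=
    (continuous_edist.comp_stronglyMeasurable (hg.prodMk hh)).measurable.pow_const p
  calc ∫⁻ ω, edist (condBary β K g ω) (condBary β K h ω) ^ p ∂P
      ≤ ∫⁻ ω, ∫⁻ x, edist (g x) (h x) ^ p ∂K ω ∂P := by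
        refine lintegral_mono_ae ?_
        filter_upwards [hK.ae_hasFinitePMoment_map hℬ hp.le hg.measurable x₀ hgP,
          hK.ae_hasFinitePMoment_map hℬ hp.le hh.measurable x₀ hhP] with ω hgω hhω
        have := hK.1 ω
        exact hβ.edist_map_rpow_le hp (K ω) hg.measurable hh.measurable hgω hhω
    _ = ∫⁻ ω, edist (g ω) (h ω) ^ p ∂P := hK.lintegral_lintegral hℬ hdist.aemeasurable

theorem lintegral_edist_condBary_rpow_le [NeZero P] (hK : IsDisintegration P ℬ K)
    (hℬ : ℬ ≤ mΩ) (hp : 0 < p) {β : Measure M → M} (hβ : IsBarycentric p β) {φ ψ : Ω → M}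
    (hφ : PIntegrable p P φ) (hψ : PIntegrable p P ψ) :
    ∫⁻ ω, edist (condBary β K φ ω) (condBary β K ψ ω) ^ p ∂P
      ≤ ∫⁻ ω, edist (φ ω) (ψ ω) ^ p ∂P := by
  obtain ⟨hφm, hφP⟩ := hφ
  obtain ⟨hψm, hψP⟩ := hψ
  have := P.nonempty_of_neZero
  set x₀ := φ (Classical.arbitrary Ω)
  have hgP : ∫⁻ ω, edist x₀ (hφm.mk φ ω) ^ p ∂P < ⊤ :=
    (lintegral_congr_ae (hφm.ae_eq_mk.mono fun ω hω => by rw [hω])).symm.trans_lt (hφP x₀)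
  have hhP : ∫⁻ ω, edist x₀ (hψm.mk ψ ω) ^ p ∂P < ⊤ :=
    (lintegral_congr_ae (hψm.ae_eq_mk.mono fun ω hω => by rw [hω])).symm.trans_lt (hψP x₀)
  calc ∫⁻ ω, edist (condBary β K φ ω) (condBary β K ψ ω) ^ p ∂P
      = ∫⁻ ω, edist (condBary β K (hφm.mk φ) ω) (condBary β K (hψm.mk ψ) ω) ^ p ∂P :=
        lintegral_congr_ae <| by
          filter_upwards [hK.condBary_ae_congr hℬ β hφm.ae_eq_mk,
            hK.condBary_ae_congr hℬ β hψm.ae_eq_mk] with ω hφω hψω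
          rw [hφω, hψω]
    _ ≤ ∫⁻ ω, edist (hφm.mk φ ω) (hψm.mk ψ ω) ^ p ∂P :=
        hK.lintegral_edist_condBary_rpow_le_of_stronglyMeasurable hℬ hp hβ
          hφm.stronglyMeasurable_mk hψm.stronglyMeasurable_mk x₀ hgP hhP
    _ = ∫⁻ ω, edist (φ ω) (ψ ω) ^ p ∂P :=
        lintegral_congr_ae <| by
          filter_upwards [hφm.ae_eq_mk, hψm.ae_eq_mk] with ω hφω hψω
          rw [hφω, hψω]

end IsDisintegration

theorem stmt8_general [mΩ : MeasurableSpace Ω]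
    [MetricSpace M] [MeasurableSpace M] [BorelSpace M]
    (P : MeasureTheory.Measure Ω) [MeasureTheory.IsProbabilityMeasure P]
    (ℬ : MeasurableSpace Ω) (hℬ : ℬ ≤ mΩ)
    (K : Ω → @MeasureTheory.Measure Ω mΩ) (hK : IsDisintegration P ℬ K)
    (p : ℝ) (hp : 1 ≤ p) (β : MeasureTheory.Measure M → M) (hβ : IsBarycentric p β)
    (φ ψ : Ω → M) (hφ : PIntegrable p P φ) (hψ : PIntegrable p P ψ) :
    (∫⁻ ω, edist (condBary β K φ ω) (condBary β K ψ ω) ^ p ∂P) ^ (1 / p)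
      ≤ (∫⁻ ω, edist (φ ω) (ψ ω) ^ p ∂P) ^ (1 / p) :=
  -- `ℬ` is the most recent `MeasurableSpace Ω` instance here, so `mΩ` has to be given explicitly.
  ENNReal.rpow_le_rpow
    (hK.lintegral_edist_condBary_rpow_le (mΩ := mΩ) hℬ (by linarith) hβ hφ hψ)
    (one_div_nonneg.2 (by linarith))

theorem stmt8 [mΩ : MeasurableSpace Ω] [StandardBorelSpace Ω]
    [MetricSpace M] [CompleteSpace M] [MeasurableSpace M] [BorelSpace M]
    (P : MeasureTheory.Measure Ω) [MeasureTheory.IsProbabilityMeasure P]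
    (ℬ : MeasurableSpace Ω) (hℬ : ℬ ≤ mΩ)
    (K : Ω → @MeasureTheory.Measure Ω mΩ) (hK : IsDisintegration P ℬ K)
    (p : ℝ) (hp : 1 ≤ p) (β : MeasureTheory.Measure M → M) (hβ : IsBarycentric p β)
    (φ ψ : Ω → M) (hφ : PIntegrable p P φ) (hψ : PIntegrable p P ψ) :
    (∫⁻ ω, edist (condBary β K φ ω) (condBary β K ψ ω) ^ p ∂P) ^ (1 / p)
      ≤ (∫⁻ ω, edist (φ ω) (ψ ω) ^ p ∂P) ^ (1 / p) :=
  stmt8_general (mΩ := mΩ) P ℬ hℬ K hK p hp β hβ φ ψ hφ hψ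
end
end

section
/- In a global NPC space M, let β_1, β_2 ∈ 𝒞_p(M) and for t ∈ [0,1] define (β_1 #_t β_2)(μ) := β_1(μ) #_t β_2(μ). Then β_1 #_t β_2 ∈ 𝒞_p(M), and moreover d_p(β_1 #_t β_2, β_3 #_t β_4) ≤ (1−t) d_p(β_1,β_3) + t d_p(β_2,β_4) for the metric d_p on 𝒞_p(M); in particular t ↦ β_1 #_t β_2 is a minimal geodesic in (𝒞_p(M), d_p). -/
open MeasureTheory ENNReal Filter Topology

noncomputable section

variable {Ω M : Type*}

/-- Empirical measure `(1/n) ∑_{k<n} δ_{φ(T^k ω)}`. -/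
def empMeas [MeasurableSpace M] (φ : Ω → M) (T : Ω → Ω) (n : ℕ) (ω : Ω) :
    MeasureTheory.Measure M :=
  (n : ℝ≥0∞)⁻¹ • ∑ k ∈ Finset.range n, MeasureTheory.Measure.dirac (φ (T^[k] ω))

/-- Uniform measure on a finite tuple. -/
def unifMeas [MeasurableSpace M] {n : ℕ} (x : Fin n → M) : MeasureTheory.Measure M :=
  (n : ℝ≥0∞)⁻¹ • ∑ i, MeasureTheory.Measure.dirac (x i)

/-- The distance between two barycentric maps:
`sup { d(β₁(x), β₂(x)) / Δ(x) }` over finite tuples `x` of positive diameter. -/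
def barDist [MetricSpace M] [MeasurableSpace M] (β₁ β₂ : MeasureTheory.Measure M → M) : ℝ :=
  sSup {r : ℝ | ∃ n : ℕ, ∃ x : Fin (n + 1) → M, Metric.diam (Set.range x) ≠ 0 ∧
    r = dist (β₁ (unifMeas x)) (β₂ (unifMeas x)) / Metric.diam (Set.range x)}

/-!
Everything is pointwise in the measure `μ`. Barycentricity: `x #_t x = x` gives the Dirac
property, and the convexity of `d(x #_t y, x' #_t y')` bounds the distance of the images of two
measures by `(1 - t) W + t W = W`. For `d_p` the same convexity inequality is divided by `Δ(x)`
and passed to the supremum. This needs the ratios to be bounded (`sSup` of an unbounded set of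
reals is `0`), and they are, by `2`: every contractive barycentric map sends the uniform measure
on a tuple within `Δ(x)` of each entry of the tuple (couple it with a Dirac mass). On a single
geodesic `d(x #_s y, x #_u y) = |s - u| d(x, y)` rescales every ratio, hence the supremum, by
`|s - u|`.
-/

section Wasserstein

variable [MeasurableSpace M] [PseudoEMetricSpace M]

lemma wassDist_dirac_le {p : ℝ} (hp : 0 ≤ p) (μ : Measure M) [IsProbabilityMeasure μ] (z : M) :
    wassDist p μ (Measure.dirac z) ≤ (∫⁻ y, edist y z ^ p ∂μ) ^ (1 / p) := by
  have hmeas : Measurable fun y : M => (y, z) := measurable_id.prodMk measurable_const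
  have hcoup : IsCoupling (μ.map fun y => (y, z)) μ (Measure.dirac z) := by
    constructor
    · rw [Measure.map_map measurable_fst hmeas]
      exact Measure.map_id
    · rw [Measure.map_map measurable_snd hmeas]
      simp [Function.comp_def, Measure.map_const]
  exact iInf₂_le_of_le _ hcoup
    (ENNReal.rpow_le_rpow ((lintegral_map_le _ _).trans_eq rfl) (by positivity))

end Wasserstein

section UniformMeasure

variable [MeasurableSpace M] {n : ℕ}

instance isProbabilityMeasure_unifMeas (x : Fin (n + 1) → M) :
    IsProbabilityMeasure (unifMeas x) := by
  constructor
  simp only [unifMeas, Measure.smul_apply, Measure.coe_finsetSum, Finset.sum_apply,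
    Measure.dirac_apply_of_mem (Set.mem_univ _), Finset.sum_const, Finset.card_univ,
    Fintype.card_fin, nsmul_eq_mul, mul_one, smul_eq_mul]
  exact ENNReal.inv_mul_cancel (by simp) (by simp)

variable [MeasurableSingletonClass M]

lemma lintegral_unifMeas (x : Fin n → M) (f : M → ℝ≥0∞) :
    ∫⁻ y, f y ∂(unifMeas x) = (n : ℝ≥0∞)⁻¹ * ∑ i, f (x i) := by
  simp [unifMeas, lintegral_smul_measure, lintegral_finsetSum_measure, lintegral_dirac]

lemma lintegral_unifMeas_le (x : Fin (n + 1) → M) {f : M → ℝ≥0∞} {C : ℝ≥0∞}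
    (hf : ∀ i, f (x i) ≤ C) : ∫⁻ y, f y ∂(unifMeas x) ≤ C := by
  calc ∫⁻ y, f y ∂(unifMeas x) ≤ ((n + 1 : ℕ) : ℝ≥0∞)⁻¹ * ∑ _i : Fin (n + 1), C := by
        rw [lintegral_unifMeas]
        gcongr with i
        exact hf i
    _ = C := by
        rw [Finset.sum_const, Finset.card_univ, Fintype.card_fin, nsmul_eq_mul, ← mul_assoc,
          ENNReal.inv_mul_cancel (by simp) (by simp), one_mul]

end UniformMeasure

section FiniteMoments

variable [MeasurableSpace M] [PseudoMetricSpace M] [MeasurableSingletonClass M] {p : ℝ}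

lemma hasFinitePMoment_dirac (hp : 0 ≤ p) (z : M) :
    HasFinitePMoment p (Measure.dirac z) := fun y => by
  rw [lintegral_dirac]
  exact ENNReal.rpow_lt_top_of_nonneg hp (edist_ne_top _ _)

lemma hasFinitePMoment_unifMeas (hp : 0 ≤ p) {n : ℕ} (x : Fin (n + 1) → M) :
    HasFinitePMoment p (unifMeas x) := fun z => by
  rw [lintegral_unifMeas]
  exact ENNReal.mul_lt_top (by simp)
    (ENNReal.sum_lt_top.2 fun i _ => ENNReal.rpow_lt_top_of_nonneg hp (edist_ne_top _ _))

end FiniteMoments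

namespace IsBarycentric

variable [MeasurableSpace M] [PseudoMetricSpace M] {p : ℝ}

lemma comp₂ {β₁ β₂ : Measure M → M} (F : M → M → M) {a b : ℝ} (ha : 0 ≤ a) (hb : 0 ≤ b)
    (hab : a + b = 1) (hdiag : ∀ x, F x x = x)
    (hF : ∀ x x' y y', dist (F x y) (F x' y') ≤ a * dist x x' + b * dist y y')
    (h₁ : IsBarycentric p β₁) (h₂ : IsBarycentric p β₂) :
    IsBarycentric p fun μ => F (β₁ μ) (β₂ μ) where
  map_dirac x := by simp only [h₁.map_dirac, h₂.map_dirac, hdiag]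
  contract μ ν hμ hν hμp hνp := by
    set W := wassDist p μ ν
    rcases eq_or_ne W ⊤ with hW | hW
    · exact hW ▸ le_top
    have hdist : ∀ β : Measure M → M, IsBarycentric p β → dist (β μ) (β ν) ≤ W.toReal :=
      fun β hβ => by
        rw [dist_edist]
        exact ENNReal.toReal_mono hW (hβ.contract μ ν hμ hν hμp hνp)
    rw [edist_dist]
    refine ENNReal.ofReal_le_of_le_toReal ?_
    calc dist (F (β₁ μ) (β₂ μ)) (F (β₁ ν) (β₂ ν))
        ≤ a * dist (β₁ μ) (β₁ ν) + b * dist (β₂ μ) (β₂ ν) := hF _ _ _ _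
      _ ≤ a * W.toReal + b * W.toReal := by gcongr; exacts [hdist β₁ h₁, hdist β₂ h₂]
      _ = W.toReal := by rw [← add_mul, hab, one_mul]

variable [MeasurableSingletonClass M] {n : ℕ}

lemma edist_unifMeas_le_ediam {β : Measure M → M}
    (hβ : IsBarycentric p β) (hp : 0 < p) (x : Fin (n + 1) → M) (i : Fin (n + 1)) :
    edist (β (unifMeas x)) (x i) ≤ Metric.ediam (Set.range x) := by
  have hmoment : ∫⁻ y, edist y (x i) ^ p ∂(unifMeas x) ≤ Metric.ediam (Set.range x) ^ p :=
    lintegral_unifMeas_le x fun j => ENNReal.rpow_le_rpow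
      (Metric.edist_le_ediam_of_mem (Set.mem_range_self j) (Set.mem_range_self i)) hp.le
  calc edist (β (unifMeas x)) (x i)
      = edist (β (unifMeas x)) (β (Measure.dirac (x i))) := by rw [hβ.map_dirac]
    _ ≤ wassDist p (unifMeas x) (Measure.dirac (x i)) :=
        hβ.contract _ _ inferInstance inferInstance (hasFinitePMoment_unifMeas hp.le x)
          (hasFinitePMoment_dirac hp.le _)
    _ ≤ (Metric.ediam (Set.range x) ^ p) ^ (1 / p) :=
        (wassDist_dirac_le hp.le _ _).trans (ENNReal.rpow_le_rpow hmoment (by positivity))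
    _ = Metric.ediam (Set.range x) := by
        rw [← ENNReal.rpow_mul, mul_one_div_cancel hp.ne', ENNReal.rpow_one]

lemma dist_unifMeas_le_diam {β : Measure M → M} (hβ : IsBarycentric p β) (hp : 0 < p)
    (x : Fin (n + 1) → M) (i : Fin (n + 1)) :
    dist (β (unifMeas x)) (x i) ≤ Metric.diam (Set.range x) := by
  rw [dist_edist, Metric.diam]
  exact ENNReal.toReal_mono (Set.finite_range x).isBounded.ediam_ne_top
    (hβ.edist_unifMeas_le_ediam hp x i)

lemma dist_unifMeas_le_two_mul_diam {β β' : Measure M → M} (hβ : IsBarycentric p β)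
    (hβ' : IsBarycentric p β') (hp : 0 < p) (x : Fin (n + 1) → M) :
    dist (β (unifMeas x)) (β' (unifMeas x)) ≤ 2 * Metric.diam (Set.range x) := by
  calc dist (β (unifMeas x)) (β' (unifMeas x))
      ≤ dist (β (unifMeas x)) (x 0) + dist (β' (unifMeas x)) (x 0) := dist_triangle_right _ _ _
    _ ≤ 2 * Metric.diam (Set.range x) := by
        linarith [hβ.dist_unifMeas_le_diam hp x 0, hβ'.dist_unifMeas_le_diam hp x 0]

end IsBarycentric

section BarDist

variable [MetricSpace M] [MeasurableSpace M]

def barRatios (β₁ β₂ : Measure M → M) : Set ℝ :=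
  {r : ℝ | ∃ n : ℕ, ∃ x : Fin (n + 1) → M, Metric.diam (Set.range x) ≠ 0 ∧
    r = dist (β₁ (unifMeas x)) (β₂ (unifMeas x)) / Metric.diam (Set.range x)}

lemma barDist_eq_sSup_barRatios (β₁ β₂ : Measure M → M) :
    barDist β₁ β₂ = sSup (barRatios β₁ β₂) := rfl

lemma barDist_nonneg (β₁ β₂ : Measure M → M) : 0 ≤ barDist β₁ β₂ :=
  Real.sSup_nonneg <| by
    rintro r ⟨n, x, -, rfl⟩
    exact div_nonneg dist_nonneg Metric.diam_nonneg

lemma bddAbove_barRatios [MeasurableSingletonClass M] {p : ℝ} (hp : 0 < p)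
    {β₁ β₂ : Measure M → M} (h₁ : IsBarycentric p β₁) (h₂ : IsBarycentric p β₂) :
    BddAbove (barRatios β₁ β₂) := by
  refine ⟨2, ?_⟩
  rintro r ⟨n, x, hΔ, rfl⟩
  rw [div_le_iff₀ (Metric.diam_nonneg.lt_of_ne' hΔ)]
  exact h₁.dist_unifMeas_le_two_mul_diam h₂ hp x

lemma barDist_comp₂_le {β₁ β₂ β₃ β₄ : Measure M → M} (F : M → M → M) {a b : ℝ}
    (ha : 0 ≤ a) (hb : 0 ≤ b)
    (hF : ∀ x x' y y', dist (F x y) (F x' y') ≤ a * dist x x' + b * dist y y')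
    (h₁₃ : BddAbove (barRatios β₁ β₃)) (h₂₄ : BddAbove (barRatios β₂ β₄)) :
    barDist (fun μ => F (β₁ μ) (β₂ μ)) (fun μ => F (β₃ μ) (β₄ μ))
      ≤ a * barDist β₁ β₃ + b * barDist β₂ β₄ := by
  refine Real.sSup_le ?_
    (add_nonneg (mul_nonneg ha (barDist_nonneg _ _)) (mul_nonneg hb (barDist_nonneg _ _)))
  rintro r ⟨n, x, hΔ, rfl⟩
  set μ := unifMeas x
  set Δ := Metric.diam (Set.range x)
  have hr₁₃ : dist (β₁ μ) (β₃ μ) / Δ ≤ barDist β₁ β₃ := le_csSup h₁₃ ⟨n, x, hΔ, rfl⟩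
  have hr₂₄ : dist (β₂ μ) (β₄ μ) / Δ ≤ barDist β₂ β₄ := le_csSup h₂₄ ⟨n, x, hΔ, rfl⟩
  calc dist (F (β₁ μ) (β₂ μ)) (F (β₃ μ) (β₄ μ)) / Δ
      ≤ (a * dist (β₁ μ) (β₃ μ) + b * dist (β₂ μ) (β₄ μ)) / Δ := by
        gcongr
        exact hF _ _ _ _
    _ = a * (dist (β₁ μ) (β₃ μ) / Δ) + b * (dist (β₂ μ) (β₄ μ) / Δ) := by ring
    _ ≤ a * barDist β₁ β₃ + b * barDist β₂ β₄ := by gcongr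

open Pointwise in
lemma barDist_comp₂_eq_mul {β₁ β₂ : Measure M → M} (F G : M → M → M) {c : ℝ} (hc : 0 ≤ c)
    (hFG : ∀ x y, dist (F x y) (G x y) = c * dist x y) :
    barDist (fun μ => F (β₁ μ) (β₂ μ)) (fun μ => G (β₁ μ) (β₂ μ)) = c * barDist β₁ β₂ := by
  have hratios : barRatios (fun μ => F (β₁ μ) (β₂ μ)) (fun μ => G (β₁ μ) (β₂ μ))
      = c • barRatios β₁ β₂ := by
    ext r
    simp only [barRatios, Set.mem_smul_set, Set.mem_ofPred_eq, smul_eq_mul, hFG, mul_div_assoc]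
    constructor
    · rintro ⟨n, x, hΔ, rfl⟩
      exact ⟨_, ⟨n, x, hΔ, rfl⟩, rfl⟩
    · rintro ⟨_, ⟨n, x, hΔ, rfl⟩, rfl⟩
      exact ⟨n, x, hΔ, rfl⟩
  rw [barDist_eq_sSup_barRatios, hratios, Real.sSup_smul_of_nonneg hc, smul_eq_mul,
    barDist_eq_sSup_barRatios]

end BarDist

theorem stmt16_general [MetricSpace M] [MeasurableSpace M] [BorelSpace M]
    (p : ℝ) (hp : 1 ≤ p)
    -- `interp x y t` is the point `x #_t y` on the geodesic from `x` to `y`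
    (interp : M → M → ℝ → M)
    (hends : ∀ x y : M, interp x y 0 = x ∧ interp x y 1 = y)
    (hconv : ∀ x x' y y' : M, ∀ t ∈ Set.Icc (0 : ℝ) 1,
      dist (interp x y t) (interp x' y' t) ≤ (1 - t) * dist x x' + t * dist y y')
    (hgeo : ∀ x y : M, ∀ s ∈ Set.Icc (0 : ℝ) 1, ∀ t ∈ Set.Icc (0 : ℝ) 1,
      dist (interp x y s) (interp x y t) = |s - t| * dist x y)
    (β₁ β₂ β₃ β₄ : MeasureTheory.Measure M → M)
    (h₁ : IsBarycentric p β₁) (h₂ : IsBarycentric p β₂)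
    (h₃ : IsBarycentric p β₃) (h₄ : IsBarycentric p β₄)
    (t : ℝ) (ht : t ∈ Set.Icc (0 : ℝ) 1) :
    IsBarycentric p (fun μ => interp (β₁ μ) (β₂ μ) t) ∧
    barDist (fun μ => interp (β₁ μ) (β₂ μ) t) (fun μ => interp (β₃ μ) (β₄ μ) t)
      ≤ (1 - t) * barDist β₁ β₃ + t * barDist β₂ β₄ ∧
    ∀ s ∈ Set.Icc (0 : ℝ) 1, ∀ u ∈ Set.Icc (0 : ℝ) 1,
      barDist (fun μ => interp (β₁ μ) (β₂ μ) s) (fun μ => interp (β₁ μ) (β₂ μ) u)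
        = |s - u| * barDist β₁ β₂ := by
  have hp₀ : 0 < p := by linarith
  have h1t : 0 ≤ 1 - t := sub_nonneg.2 ht.2
  have hdiag : ∀ x, interp x x t = x := fun x => by
    have h := hgeo x x 0 (Set.left_mem_Icc.2 zero_le_one) t ht
    rw [(hends x x).1, dist_self, mul_zero, dist_eq_zero] at h
    exact h.symm
  have hlip := fun x x' y y' => hconv x x' y y' t ht
  exact ⟨h₁.comp₂ (interp · · t) h1t ht.1 (by ring) hdiag hlip h₂,
    barDist_comp₂_le (interp · · t) h1t ht.1 hlip (bddAbove_barRatios hp₀ h₁ h₃)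
      (bddAbove_barRatios hp₀ h₂ h₄),
    fun s hs u hu => barDist_comp₂_eq_mul (interp · · s) (interp · · u) (abs_nonneg _)
      fun x y => hgeo x y s hs u hu⟩

theorem stmt16 [MetricSpace M] [CompleteSpace M] [MeasurableSpace M] [BorelSpace M]
    (p : ℝ) (hp : 1 ≤ p)
    -- `interp x y t` is the point `x #_t y` on the geodesic from `x` to `y`
    (interp : M → M → ℝ → M)
    (hends : ∀ x y : M, interp x y 0 = x ∧ interp x y 1 = y)
    (hconv : ∀ x x' y y' : M, ∀ t ∈ Set.Icc (0 : ℝ) 1,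
      dist (interp x y t) (interp x' y' t) ≤ (1 - t) * dist x x' + t * dist y y')
    (hgeo : ∀ x y : M, ∀ s ∈ Set.Icc (0 : ℝ) 1, ∀ t ∈ Set.Icc (0 : ℝ) 1,
      dist (interp x y s) (interp x y t) = |s - t| * dist x y)
    (β₁ β₂ β₃ β₄ : MeasureTheory.Measure M → M)
    (h₁ : IsBarycentric p β₁) (h₂ : IsBarycentric p β₂)
    (h₃ : IsBarycentric p β₃) (h₄ : IsBarycentric p β₄)
    (t : ℝ) (ht : t ∈ Set.Icc (0 : ℝ) 1) :
    IsBarycentric p (fun μ => interp (β₁ μ) (β₂ μ) t) ∧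
    barDist (fun μ => interp (β₁ μ) (β₂ μ) t) (fun μ => interp (β₃ μ) (β₄ μ) t)
      ≤ (1 - t) * barDist β₁ β₃ + t * barDist β₂ β₄ ∧
    ∀ s ∈ Set.Icc (0 : ℝ) 1, ∀ u ∈ Set.Icc (0 : ℝ) 1,
      barDist (fun μ => interp (β₁ μ) (β₂ μ) s) (fun μ => interp (β₁ μ) (β₂ μ) u)
        = |s - u| * barDist β₁ β₂ :=
  stmt16_general p hp interp hends hconv hgeo β₁ β₂ β₃ β₄ h₁ h₂ h₃ h₄ t ht
end
end
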